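/- Let D be a c-uniform domain in a real normed space E (c ≥ 1), i.e., every pair of points z₁, z₂ ∈ D can be joined by a rectifiable arc α in D with ℓ(α) ≤ c|z₁-z₂| and min(ℓ(α[z₁,z]), ℓ(α[z₂,z])) ≤ c·d_D(z) for all z ∈ α. Then for all z₁, z₂ ∈ D, k_D(z₁, z₂) ≤ 4c²·log(1 + |z₁-z₂|/min(d_D(z₁), d_D(z₂))) + 4c², i.e., k_D(z₁,z₂) ≤ 4c²(j_D(z₁,z₂) + 1). -/

import Mathlib

/-!
Join `z₁`, `z₂` by a uniform arc `γ` of length `L ≤ c |z₁ - z₂|`. If `x` is the arclength from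
`γ t` to the nearer endpoint `zᵢ`, then `d_D(γ t) ≥ d_D(zᵢ) - x` (`d_D` is 1-Lipschitz) and
`c d_D(γ t) ≥ x`, whence `2c d_D(γ t) ≥ d_D(zᵢ)/2 + x`. So on each half of the arc the integrand
`|γ'| / d_D(γ)` is at most `2c` times the logarithmic derivative of `d_D(zᵢ)/2 + x`, and each half
contributes at most `2c log(1 + L / d_D(zᵢ)) ≤ 2c (log c + j_D(z₁, z₂))`.
-/

open Set Metric Real intervalIntegral

noncomputable def dD {E : Type*} [NormedAddCommGroup E] [NormedSpace ℝ E]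
    (D : Set E) (z : E) : ℝ := Metric.infDist z (frontier D)

noncomputable def jD {E : Type*} [NormedAddCommGroup E] [NormedSpace ℝ E]
    (D : Set E) (z₁ z₂ : E) : ℝ :=
  Real.log (1 + dist z₁ z₂ / min (dD D z₁) (dD D z₂))

noncomputable def clen {E : Type*} [NormedAddCommGroup E] [NormedSpace ℝ E]
    (γ : ℝ → E) : ℝ := ∫ t in (0:ℝ)..1, ‖deriv γ t‖

noncomputable def sublen {E : Type*} [NormedAddCommGroup E] [NormedSpace ℝ E]
    (γ : ℝ → E) (a b : ℝ) : ℝ := ∫ t in a..b, ‖deriv γ t‖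

noncomputable def qhLen {E : Type*} [NormedAddCommGroup E] [NormedSpace ℝ E]
    (D : Set E) (γ : ℝ → E) : ℝ := ∫ t in (0:ℝ)..1, ‖deriv γ t‖ / dD D (γ t)

def IsCurveIn {E : Type*} [NormedAddCommGroup E] [NormedSpace ℝ E]
    (D : Set E) (γ : ℝ → E) (z₁ z₂ : E) : Prop :=
  ContDiffOn ℝ 1 γ (Set.Icc 0 1) ∧ γ 0 = z₁ ∧ γ 1 = z₂ ∧
    ∀ t ∈ Set.Icc (0:ℝ) 1, γ t ∈ D

noncomputable def kD {E : Type*} [NormedAddCommGroup E] [NormedSpace ℝ E]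
    (D : Set E) (z₁ z₂ : E) : ℝ :=
  sInf {l : ℝ | ∃ γ : ℝ → E, IsCurveIn D γ z₁ z₂ ∧ l = qhLen D γ}

def IsUniform {E : Type*} [NormedAddCommGroup E] [NormedSpace ℝ E]
    (D : Set E) (c : ℝ) : Prop :=
  ∀ z₁ ∈ D, ∀ z₂ ∈ D, ∃ γ : ℝ → E, IsCurveIn D γ z₁ z₂ ∧
    clen γ ≤ c * dist z₁ z₂ ∧
    ∀ t ∈ Set.Icc (0:ℝ) 1,
      min (sublen γ 0 t) (sublen γ t 1) ≤ c * dD D (γ t)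

variable {E : Type*} [NormedAddCommGroup E] [NormedSpace ℝ E]

open MeasureTheory

lemma div_two_add_le_of_sub_le_of_le_mul {c d x ρ : ℝ} (hc : 1 ≤ c) (hx : 0 ≤ x)
    (h₁ : d - x ≤ ρ) (h₂ : x ≤ c * ρ) : d / 2 + x ≤ 2 * c * ρ := by
  rcases le_total d (2 * x) with hdx | hdx
  · linarith
  · have hρ : 0 ≤ ρ := by linarith
    nlinarith

lemma IntervalIntegrable.div_continuousOn_Icc {a b : ℝ} {f g : ℝ → ℝ} (hab : a ≤ b)
    (hf : IntervalIntegrable f volume a b) (hg : ContinuousOn g (Icc a b))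
    (hg0 : ∀ t ∈ Icc a b, g t ≠ 0) : IntervalIntegrable (fun t ↦ f t / g t) volume a b := by
  simp only [div_eq_mul_inv]
  exact hf.mul_continuousOn (uIcc_of_le hab ▸ hg.inv₀ hg0)

lemma integral_div_eq_log_sub {a b : ℝ} {φ φ' : ℝ → ℝ} (hab : a ≤ b)
    (hφ : ContinuousOn φ (Icc a b)) (hφ' : ∀ t ∈ Ioo a b, HasDerivAt φ (φ' t) t)
    (hint : IntervalIntegrable φ' volume a b) (hpos : ∀ t ∈ Icc a b, 0 < φ t) :
    ∫ t in a..b, φ' t / φ t = log (φ b) - log (φ a) :=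
  integral_eq_sub_of_hasDerivAt_of_le hab (hφ.log fun t ht ↦ (hpos t ht).ne')
    (fun t ht ↦ (hφ' t ht).log (hpos t (Ioo_subset_Icc_self ht)).ne')
    (hint.div_continuousOn_Icc hab hφ fun t ht ↦ (hpos t ht).ne')

lemma integral_div_le_mul_integral_div {a b K : ℝ} {h ρ φ : ℝ → ℝ} (hab : a ≤ b)
    (hh : IntervalIntegrable h volume a b) (hh0 : ∀ t ∈ Icc a b, 0 ≤ h t)
    (hρ : ContinuousOn ρ (Icc a b)) (hρ0 : ∀ t ∈ Icc a b, 0 < ρ t)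
    (hφ : ContinuousOn φ (Icc a b)) (hφ0 : ∀ t ∈ Icc a b, 0 < φ t)
    (hle : ∀ t ∈ Icc a b, φ t ≤ K * ρ t) :
    ∫ t in a..b, h t / ρ t ≤ K * ∫ t in a..b, h t / φ t := by
  rw [← intervalIntegral.integral_const_mul]
  refine integral_mono_on hab (hh.div_continuousOn_Icc hab hρ fun t ht ↦ (hρ0 t ht).ne')
    ((hh.div_continuousOn_Icc hab hφ fun t ht ↦ (hφ0 t ht).ne').const_mul K) fun t ht ↦ ?_
  have hφt := hφ0 t ht
  calc h t / ρ t = h t / φ t * φ t / ρ t := by field_simp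
    _ ≤ h t / φ t * (K * ρ t) / ρ t := by
          gcongr
          exacts [(hρ0 t ht).le, div_nonneg (hh0 t ht) hφt.le, hle t ht]
    _ = K * (h t / φ t) := by field_simp [(hρ0 t ht).ne']

lemma integral_div_le_of_sub_le_of_le_mul {a b c d : ℝ} {x h ρ : ℝ → ℝ} (hab : a ≤ b)
    (hc : 1 ≤ c) (hd : 0 < d) (hx : ContinuousOn x (Icc a b))
    (hx' : ∀ t ∈ Ioo a b, HasDerivAt x (h t) t) (hx0 : ∀ t ∈ Icc a b, 0 ≤ x t)
    (hh : IntervalIntegrable h volume a b) (hh0 : ∀ t ∈ Icc a b, 0 ≤ h t)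
    (hρ : ContinuousOn ρ (Icc a b)) (hρ0 : ∀ t ∈ Icc a b, 0 < ρ t)
    (h₁ : ∀ t ∈ Icc a b, d - x t ≤ ρ t) (h₂ : ∀ t ∈ Icc a b, x t ≤ c * ρ t) :
    ∫ t in a..b, h t / ρ t ≤ 2 * c * (log (d / 2 + x b) - log (d / 2 + x a)) := by
  have hφ : ContinuousOn (fun t ↦ d / 2 + x t) (Icc a b) := continuousOn_const.add hx
  have hφ0 (t : ℝ) (ht : t ∈ Icc a b) : 0 < d / 2 + x t := by linarith [hx0 t ht]
  rw [← integral_div_eq_log_sub hab hφ (fun t ht ↦ (hx' t ht).const_add _) hh hφ0]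
  exact integral_div_le_mul_integral_div hab hh hh0 hρ hρ0 hφ hφ0
    fun t ht ↦ div_two_add_le_of_sub_le_of_le_mul hc (hx0 t ht) (h₁ t ht) (h₂ t ht)

lemma integral_div_le_of_sub_le_of_le_mul_of_neg {a b c d : ℝ} {x h ρ : ℝ → ℝ}
    (hab : a ≤ b) (hc : 1 ≤ c) (hd : 0 < d) (hx : ContinuousOn x (Icc a b))
    (hx' : ∀ t ∈ Ioo a b, HasDerivAt x (-h t) t) (hx0 : ∀ t ∈ Icc a b, 0 ≤ x t)
    (hh : IntervalIntegrable h volume a b) (hh0 : ∀ t ∈ Icc a b, 0 ≤ h t)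
    (hρ : ContinuousOn ρ (Icc a b)) (hρ0 : ∀ t ∈ Icc a b, 0 < ρ t)
    (h₁ : ∀ t ∈ Icc a b, d - x t ≤ ρ t) (h₂ : ∀ t ∈ Icc a b, x t ≤ c * ρ t) :
    ∫ t in a..b, h t / ρ t ≤ 2 * c * (log (d / 2 + x a) - log (d / 2 + x b)) := by
  have hφ : ContinuousOn (fun t ↦ d / 2 + x t) (Icc a b) := continuousOn_const.add hx
  have hφ0 (t : ℝ) (ht : t ∈ Icc a b) : 0 < d / 2 + x t := by linarith [hx0 t ht]
  rw [← neg_sub,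
    ← integral_div_eq_log_sub hab hφ (fun t ht ↦ (hx' t ht).const_add _) hh.neg hφ0]
  simp only [neg_div, intervalIntegral.integral_neg, neg_neg]
  exact integral_div_le_mul_integral_div hab hh hh0 hρ hρ0 hφ hφ0
    fun t ht ↦ div_two_add_le_of_sub_le_of_le_mul hc (hx0 t ht) (h₁ t ht) (h₂ t ht)

theorem integral_div_le_of_min_le {a b c d₁ d₂ : ℝ} {ℓ h ρ : ℝ → ℝ} (hab : a ≤ b)
    (hc : 1 ≤ c) (hd₁ : 0 < d₁) (hd₂ : 0 < d₂)
    (hℓ : ContinuousOn ℓ (Icc a b)) (hℓ' : ∀ t ∈ Ioo a b, HasDerivAt ℓ (h t) t)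
    (hh : IntervalIntegrable h volume a b) (hh0 : ∀ t ∈ Icc a b, 0 ≤ h t)
    (hρ : ContinuousOn ρ (Icc a b)) (hρ0 : ∀ t ∈ Icc a b, 0 < ρ t)
    (h₁ : ∀ t ∈ Icc a b, d₁ - (ℓ t - ℓ a) ≤ ρ t)
    (h₂ : ∀ t ∈ Icc a b, d₂ - (ℓ b - ℓ t) ≤ ρ t)
    (hmin : ∀ t ∈ Icc a b, min (ℓ t - ℓ a) (ℓ b - ℓ t) ≤ c * ρ t) :
    ∫ t in a..b, h t / ρ t ≤
      2 * c * (log (1 + (ℓ b - ℓ a) / d₁) + log (1 + (ℓ b - ℓ a) / d₂)) := by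
  have hmono : MonotoneOn ℓ (Icc a b) := by
    refine monotoneOn_of_hasDerivWithinAt_nonneg (convex_Icc a b) hℓ (f' := h) ?_ ?_ <;>
      rw [interior_Icc]
    · exact fun t ht ↦ (hℓ' t ht).hasDerivWithinAt
    · exact fun t ht ↦ hh0 t (Ioo_subset_Icc_self ht)
  have ha : a ∈ Icc a b := left_mem_Icc.2 hab
  have hb : b ∈ Icc a b := right_mem_Icc.2 hab
  have hL : 0 ≤ ℓ b - ℓ a := sub_nonneg.2 (hmono ha hb hab)
  obtain ⟨m, hm, hℓm⟩ : ∃ m ∈ Icc a b, ℓ m = (ℓ a + ℓ b) / 2 :=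
    intermediate_value_Icc hab hℓ ⟨by linarith, by linarith⟩
  have hm' : m ∈ uIcc a b := mem_uIcc_of_le hm.1 hm.2
  have ham : Icc a m ⊆ Icc a b := Icc_subset_Icc le_rfl hm.2
  have hmb : Icc m b ⊆ Icc a b := Icc_subset_Icc hm.1 le_rfl
  have first := integral_div_le_of_sub_le_of_le_mul (x := fun t ↦ ℓ t - ℓ a) hm.1 hc hd₁
    ((hℓ.mono ham).sub continuousOn_const)
    (fun t ht ↦ (hℓ' t ⟨ht.1, ht.2.trans_le hm.2⟩).sub_const _)
    (fun t ht ↦ sub_nonneg.2 (hmono ha (ham ht) ht.1))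
    (hh.mono_set (uIcc_subset_uIcc_left hm'))
    (fun t ht ↦ hh0 t (ham ht)) (hρ.mono ham) (fun t ht ↦ hρ0 t (ham ht))
    (fun t ht ↦ h₁ t (ham ht)) fun t ht ↦ by
      have hℓt : ℓ t ≤ ℓ m := hmono (ham ht) hm ht.2
      simpa only [min_eq_left (by linarith : ℓ t - ℓ a ≤ ℓ b - ℓ t)] using hmin t (ham ht)
  have second := integral_div_le_of_sub_le_of_le_mul_of_neg (x := fun t ↦ ℓ b - ℓ t) hm.2 hc
    hd₂ (continuousOn_const.sub (hℓ.mono hmb))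
    (fun t ht ↦ (hℓ' t ⟨hm.1.trans_lt ht.1, ht.2⟩).const_sub _)
    (fun t ht ↦ sub_nonneg.2 (hmono (hmb ht) hb ht.2))
    (hh.mono_set (uIcc_subset_uIcc_right hm'))
    (fun t ht ↦ hh0 t (hmb ht)) (hρ.mono hmb) (fun t ht ↦ hρ0 t (hmb ht))
    (fun t ht ↦ h₂ t (hmb ht)) fun t ht ↦ by
      have hℓt : ℓ m ≤ ℓ t := hmono hm (hmb ht) ht.1
      simpa only [min_eq_right (by linarith : ℓ b - ℓ t ≤ ℓ t - ℓ a)] using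
        hmin t (hmb ht)
  have hlog (d : ℝ) (hd : 0 < d) :
      log (d / 2 + (ℓ b - ℓ a) / 2) - log (d / 2) = log (1 + (ℓ b - ℓ a) / d) := by
    rw [← log_div (by positivity) (by positivity)]
    congr 1
    field_simp
  have hℓam : ℓ m - ℓ a = (ℓ b - ℓ a) / 2 := by rw [hℓm]; ring
  have hℓmb : ℓ b - ℓ m = (ℓ b - ℓ a) / 2 := by rw [hℓm]; ring
  simp only [hℓam, hℓmb, sub_self, add_zero, hlog d₁ hd₁, hlog d₂ hd₂] at first second
  have hint := hh.div_continuousOn_Icc hab hρ fun t ht ↦ (hρ0 t ht).ne'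
  rw [← integral_add_adjacent_intervals (hint.mono_set (uIcc_subset_uIcc_left hm'))
    (hint.mono_set (uIcc_subset_uIcc_right hm'))]
  linarith

namespace ContDiffOn

variable {γ : ℝ → E} {a b : ℝ}

lemma intervalIntegrable_norm_deriv (hγ : ContDiffOn ℝ 1 γ (Icc a b)) (hab : a < b) :
    IntervalIntegrable (fun t ↦ ‖deriv γ t‖) volume a b := by
  have hcont : ContinuousOn (derivWithin γ (Icc a b)) (Icc a b) :=
    hγ.continuousOn_derivWithin (uniqueDiffOn_Icc hab) le_rfl
  rw [intervalIntegrable_iff_integrableOn_Ioo_of_le hab.le]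
  refine (hcont.norm.integrableOn_Icc.mono_set Ioo_subset_Icc_self).congr_fun
    (fun t ht ↦ congrArg (‖·‖) (derivWithin_of_mem_nhds (Icc_mem_nhds ht.1 ht.2)))
    measurableSet_Ioo

lemma continuousOn_sublen (hγ : ContDiffOn ℝ 1 γ (Icc a b)) (hab : a < b) :
    ContinuousOn (sublen γ a) (Icc a b) := by
  rw [← uIcc_of_le hab.le]
  exact continuousOn_primitive_interval' (hγ.intervalIntegrable_norm_deriv hab) left_mem_uIcc

lemma hasDerivAt_sublen (hγ : ContDiffOn ℝ 1 γ (Icc a b)) {t : ℝ} (ht : t ∈ Ioo a b) :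
    HasDerivAt (sublen γ a) ‖deriv γ t‖ t := by
  have hab : a < b := ht.1.trans ht.2
  have hcont : ContinuousOn (fun t ↦ ‖deriv γ t‖) (Ioo a b) :=
    ((hγ.mono Ioo_subset_Icc_self).continuousOn_deriv_of_isOpen isOpen_Ioo le_rfl).norm
  exact integral_hasDerivAt_right ((hγ.intervalIntegrable_norm_deriv hab).mono_set
      (uIcc_subset_uIcc_left (mem_uIcc_of_le ht.1.le ht.2.le)))
    (hcont.stronglyMeasurableAtFilter isOpen_Ioo t ht) (hcont.continuousAt (Ioo_mem_nhds ht.1 ht.2))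

lemma norm_sub_le_sublen (hγ : ContDiffOn ℝ 1 γ (Icc a b)) {p q : ℝ} (hap : a ≤ p)
    (hpq : p ≤ q) (hqb : q ≤ b) : ‖γ q - γ p‖ ≤ sublen γ p q := by
  rcases hpq.eq_or_lt with rfl | hpq'
  · simp [sublen]
  have hγpq := hγ.mono (Icc_subset_Icc hap hqb)
  exact norm_sub_le_integral_of_norm_deriv_le_of_le hpq hγpq.continuousOn
    ((hγpq.differentiableOn one_ne_zero).mono Ioo_subset_Icc_self) (ae_of_all _ fun _ _ ↦ le_rfl)
    (hγpq.intervalIntegrable_norm_deriv hpq')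

end ContDiffOn

lemma dD_le_dD_add_dist (D : Set E) (z w : E) : dD D z ≤ dD D w + dist z w :=
  infDist_le_infDist_add_dist

lemma continuous_dD (D : Set E) : Continuous (dD D) :=
  continuous_infDist_pt _

section QuasihyperbolicBound

variable {D : Set E}

lemma dD_pos (hD : IsOpen D) (hbd : (frontier D).Nonempty) {z : E} (hz : z ∈ D) :
    0 < dD D z :=
  (isClosed_frontier.notMem_iff_infDist_pos hbd).1
    fun hzf ↦ (disjoint_frontier_iff_isOpen.2 hD).notMem_of_mem_left hzf hz

lemma qhLen_nonneg (γ : ℝ → E) : 0 ≤ qhLen D γ :=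
  integral_nonneg zero_le_one fun _ _ ↦ div_nonneg (norm_nonneg _) infDist_nonneg

lemma kD_le_qhLen {γ : ℝ → E} {z₁ z₂ : E} (hγ : IsCurveIn D γ z₁ z₂) :
    kD D z₁ z₂ ≤ qhLen D γ :=
  csInf_le ⟨0, fun _ ⟨γ', _, hl⟩ ↦ hl ▸ qhLen_nonneg γ'⟩ ⟨γ, hγ, rfl⟩

theorem qhLen_le_of_min_sublen_le (hD : IsOpen D) (hbd : (frontier D).Nonempty) {c : ℝ}
    (hc : 1 ≤ c) {γ : ℝ → E} {z₁ z₂ : E} (hγ : IsCurveIn D γ z₁ z₂)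
    (hmin : ∀ t ∈ Icc (0:ℝ) 1, min (sublen γ 0 t) (sublen γ t 1) ≤ c * dD D (γ t)) :
    qhLen D γ ≤ 2 * c * (log (1 + clen γ / dD D z₁) + log (1 + clen γ / dD D z₂)) := by
  obtain ⟨hγ, rfl, rfl, hγD⟩ := hγ
  have hint := hγ.intervalIntegrable_norm_deriv zero_lt_one
  have h00 : sublen γ 0 0 = 0 := integral_same
  have hsplit (t : ℝ) (ht : t ∈ Icc (0:ℝ) 1) :
      sublen γ t 1 = sublen γ 0 1 - sublen γ 0 t :=
    (integral_interval_sub_left hint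
      (hint.mono_set (uIcc_subset_uIcc_left (mem_uIcc_of_le ht.1 ht.2)))).symm
  have hclen : clen γ = sublen γ 0 1 - sublen γ 0 0 := by rw [h00, sub_zero]; rfl
  rw [hclen]
  refine integral_div_le_of_min_le zero_le_one hc (dD_pos hD hbd (hγD 0 ⟨le_rfl, zero_le_one⟩))
    (dD_pos hD hbd (hγD 1 ⟨zero_le_one, le_rfl⟩)) (hγ.continuousOn_sublen zero_lt_one)
    (fun t ht ↦ hγ.hasDerivAt_sublen ht) hint (fun _ _ ↦ norm_nonneg _)
    ((continuous_dD D).comp_continuousOn hγ.continuousOn) (fun t ht ↦ dD_pos hD hbd (hγD t ht))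
    (fun t ht ↦ ?_) (fun t ht ↦ ?_) (fun t ht ↦ ?_)
  · rw [h00, sub_zero]
    linarith [dD_le_dD_add_dist D (γ 0) (γ t), hγ.norm_sub_le_sublen le_rfl ht.1 ht.2,
      dist_eq_norm (γ t) (γ 0), dist_comm (γ 0) (γ t)]
  · rw [← hsplit t ht]
    linarith [dD_le_dD_add_dist D (γ 1) (γ t), hγ.norm_sub_le_sublen ht.1 ht.2 le_rfl,
      dist_eq_norm (γ 1) (γ t)]
  · rw [h00, sub_zero, ← hsplit t ht]
    exact hmin t ht

end QuasihyperbolicBound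

lemma log_one_add_div_le_log_add_log {c L r m d : ℝ} (hc : 1 ≤ c) (hL0 : 0 ≤ L)
    (hL : L ≤ c * r) (hm : 0 < m) (hmd : m ≤ d) :
    log (1 + L / d) ≤ log c + log (1 + r / m) := by
  have hd : 0 < d := hm.trans_le hmd
  have hr : 0 ≤ r := nonneg_of_mul_nonneg_right (hL0.trans hL) (by linarith)
  rw [← log_mul (zero_lt_one.trans_le hc).ne' (by positivity)]
  refine log_le_log (by positivity) ?_
  calc 1 + L / d ≤ 1 + c * r / m := by gcongr
    _ ≤ c * (1 + r / m) := by rw [mul_add, mul_one, mul_div_assoc]; linarith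

theorem stmt9 (D : Set E) (hD : IsOpen D) (hbd : (frontier D).Nonempty)
    (c : ℝ) (hc : 1 ≤ c) (hunif : IsUniform D c)
    (z₁ z₂ : E) (h₁ : z₁ ∈ D) (h₂ : z₂ ∈ D) :
    kD D z₁ z₂ ≤ 4 * c ^ 2 * (jD D z₁ z₂ + 1) := by
  obtain ⟨γ, hγ, hlen, hmin⟩ := hunif z₁ h₁ z₂ h₂
  have hm : 0 < min (dD D z₁) (dD D z₂) := lt_min (dD_pos hD hbd h₁) (dD_pos hD hbd h₂)
  have hclen : 0 ≤ clen γ := integral_nonneg zero_le_one fun _ _ ↦ norm_nonneg _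
  have hj : 0 ≤ jD D z₁ z₂ :=
    log_nonneg (le_add_of_nonneg_right (div_nonneg dist_nonneg hm.le))
  have hlog (d : ℝ) (hd : min (dD D z₁) (dD D z₂) ≤ d) :
      log (1 + clen γ / d) ≤ log c + jD D z₁ z₂ :=
    log_one_add_div_le_log_add_log hc hclen hlen hm hd
  have hlogc : log c ≤ c - 1 := log_le_sub_one_of_pos (by linarith)
  calc kD D z₁ z₂ ≤ qhLen D γ := kD_le_qhLen hγ
    _ ≤ 2 * c * (log (1 + clen γ / dD D z₁) + log (1 + clen γ / dD D z₂)) :=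
      qhLen_le_of_min_sublen_le hD hbd hc hγ hmin
    _ ≤ 2 * c * (2 * (log c + jD D z₁ z₂)) := by
      gcongr
      linarith [hlog _ (min_le_left _ _), hlog _ (min_le_right _ _)]
    _ ≤ 4 * c ^ 2 * (jD D z₁ z₂ + 1) := by
      nlinarith [mul_nonneg (by linarith : (0:ℝ) ≤ c - 1) hj]
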